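/- Let b ∈ ℝ with 0 < b² < 1, ν_b = Γ(1 − b²)/Γ(1 + b²) (a positive real), ψ̂ ∈ ℝ, A_b ∈ ℂ. For j ∈ ℂ with b²(2j+1) ∉ ℤ and for σ ∈ {+1, −1} define A_σ(j) = A_b · ν_b^{−j−1/2} · Γ(−b²(2j+1)) · e^{−ψ̂(2j+1)σ}, set A^ε(j) = (A_{+1}(j) + (−1)^ε A_{−1}(j))/2 for ε ∈ {0,1}, and define R(j) = −ν_b^{2j+1} · Γ(1 + b²(2j+1))/Γ(1 − b²(2j+1)). Then for every such j and each ε ∈ {0,1}: A^ε(j) = (−1)^ε · R(−j−1) · A^ε(−j−1). -/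

import Mathlib

/-!
With `x = b²(2j+1)`, the reflection `j ↦ -j-1` sends `x ↦ -x`, `ν_b^{-j-1/2} ↦ ν_b^{j+1/2}` and
`e^{-ψ̂(2j+1)σ} ↦ e^{ψ̂(2j+1)σ}`. Hence `A_σ(j) = R(-j-1) A_{-σ}(-j-1)`, which after cancelling the
powers of `ν_b` is the Gamma identity `Γ(-x) = -Γ(1-x) Γ(x) / Γ(1+x)`, i.e. the functional
equation `Γ(s+1) = s Γ(s)` at `s = x` and `s = -x`. Taking the even and odd parts in `σ`
gives the sign `(-1)^ε`.
-/

open Complex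

/-- `ν_b = Γ(1-b²)/Γ(1+b²)`. -/
noncomputable def nub (b : ℝ) : ℝ := Real.Gamma (1 - b ^ 2) / Real.Gamma (1 + b ^ 2)

/-- `A_σ(j) = A_b ν_b^{-j-1/2} Γ(-b²(2j+1)) e^{-ψ̂(2j+1)σ}`. -/
noncomputable def Asig (b ψ : ℝ) (Ab : ℂ) (σ : ℝ) (j : ℂ) : ℂ :=
  Ab * ((nub b : ℝ) : ℂ) ^ (-j - 1/2) *
    Complex.Gamma (-(b : ℂ) ^ 2 * (2 * j + 1)) *
    Complex.exp (-(ψ : ℂ) * (2 * j + 1) * (σ : ℂ))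

/-- `A^ε(j) = (A_{+1}(j) + (-1)^ε A_{-1}(j))/2`. -/
noncomputable def Aeps (b ψ : ℝ) (Ab : ℂ) (ε : ℕ) (j : ℂ) : ℂ :=
  (Asig b ψ Ab 1 j + (-1 : ℂ) ^ ε * Asig b ψ Ab (-1) j) / 2

/-- The closed string reflection amplitude
`R(j) = -ν_b^{2j+1} Γ(1+b²(2j+1))/Γ(1-b²(2j+1))`. -/
noncomputable def Rrefl (b : ℝ) (j : ℂ) : ℂ :=
  -((nub b : ℝ) : ℂ) ^ (2 * j + 1) *
    Complex.Gamma (1 + (b : ℂ) ^ 2 * (2 * j + 1)) /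
    Complex.Gamma (1 - (b : ℂ) ^ 2 * (2 * j + 1))

theorem Complex.Gamma_neg_eq {x : ℂ} (hx : ∀ n : ℕ, x ≠ -n) :
    Gamma (-x) = -Gamma (1 - x) * Gamma x / Gamma (1 + x) := by
  have hx0 : x ≠ 0 := by simpa using hx 0
  have hΓx : Gamma x ≠ 0 := Gamma_ne_zero hx
  have hΓ_one_add : Gamma (1 + x) = x * Gamma x := by
    rw [add_comm, Gamma_add_one x hx0]
  have hΓ_one_sub : Gamma (1 - x) = -x * Gamma (-x) := by
    rw [← Gamma_add_one (-x) (neg_ne_zero.mpr hx0), neg_add_eq_sub]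
  rw [hΓ_one_add, hΓ_one_sub]
  field_simp

theorem nub_pos {b : ℝ} (hb : b ^ 2 < 1) : 0 < nub b :=
  div_pos (Real.Gamma_pos_of_pos (by linarith)) (Real.Gamma_pos_of_pos (by positivity))

theorem Asig_eq_Rrefl_mul_Asig_reflect {b : ℝ} (hb : b ^ 2 < 1) (ψ : ℝ) (Ab : ℂ) (σ : ℝ)
    {j : ℂ} (hj : (b : ℂ) ^ 2 * (2 * j + 1) ∉ Set.range (Int.cast : ℤ → ℂ)) :
    Asig b ψ Ab σ j = Rrefl b (-j - 1) * Asig b ψ Ab (-σ) (-j - 1) := by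
  set x : ℂ := (b : ℂ) ^ 2 * (2 * j + 1)
  have hx_nat : ∀ n : ℕ, x ≠ -n := fun n h => hj ⟨-n, by push_cast [h]; rfl⟩
  have hν : ((nub b : ℝ) : ℂ) ≠ 0 := ofReal_ne_zero.mpr (nub_pos hb).ne'
  have hpow : ((nub b : ℝ) : ℂ) ^ (-j - 1 / 2) =
      ((nub b : ℝ) : ℂ) ^ (2 * (-j - 1) + 1) * ((nub b : ℝ) : ℂ) ^ (-(-j - 1) - 1 / 2) := by
    rw [← cpow_add _ _ hν]
    ring_nf
  have hexp : -(ψ : ℂ) * (2 * (-j - 1) + 1) * ((-σ : ℝ) : ℂ) = -(ψ : ℂ) * (2 * j + 1) * σ := by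
    push_cast
    ring
  unfold Asig Rrefl
  rw [hpow, hexp, show -(b : ℂ) ^ 2 * (2 * j + 1) = -x by ring,
    show -(b : ℂ) ^ 2 * (2 * (-j - 1) + 1) = x by ring,
    show (1 : ℂ) + (b : ℂ) ^ 2 * (2 * (-j - 1) + 1) = 1 - x by ring,
    show (1 : ℂ) - (b : ℂ) ^ 2 * (2 * (-j - 1) + 1) = 1 + x by ring, Gamma_neg_eq hx_nat]
  ring

theorem stmt_18_general (b : ℝ) (h2 : b ^ 2 < 1) (ψ : ℝ) (Ab : ℂ)
    (j : ℂ) (hj : (b : ℂ) ^ 2 * (2 * j + 1) ∉ Set.range (Int.cast : ℤ → ℂ))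
    (ε : ℕ) :
    Aeps b ψ Ab ε j = (-1 : ℂ) ^ ε * Rrefl b (-j - 1) * Aeps b ψ Ab ε (-j - 1) := by
  have hplus := Asig_eq_Rrefl_mul_Asig_reflect h2 ψ Ab 1 hj
  have hminus := Asig_eq_Rrefl_mul_Asig_reflect h2 ψ Ab (-1) hj
  rw [neg_neg] at hminus
  have hsign : (-1 : ℂ) ^ ε * (-1) ^ ε = 1 := by rw [← mul_pow]; norm_num
  unfold Aeps
  rw [hplus, hminus]
  linear_combination (-(Rrefl b (-j - 1) * Asig b ψ Ab (-1) (-j - 1)) / 2) * hsign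

/-- For `0 < b² < 1`, real `ψ̂`, `A_b ∈ ℂ`, any `j` with
`b²(2j+1) ∉ ℤ` and `ε ∈ {0,1}`: `A^ε(j) = (-1)^ε R(-j-1) A^ε(-j-1)`. -/
theorem stmt_18 (b : ℝ) (h1 : 0 < b ^ 2) (h2 : b ^ 2 < 1) (ψ : ℝ) (Ab : ℂ)
    (j : ℂ) (hj : (b : ℂ) ^ 2 * (2 * j + 1) ∉ Set.range (Int.cast : ℤ → ℂ))
    (ε : ℕ) (hε : ε = 0 ∨ ε = 1) :
    Aeps b ψ Ab ε j = (-1 : ℂ) ^ ε * Rrefl b (-j - 1) * Aeps b ψ Ab ε (-j - 1) :=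
  stmt_18_general b h2 ψ Ab j hj ε
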